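/- Let 0 < τ < 1, m ≥ 1, let ρ ∈ C_c^∞(ℝ^m) with ∫_{ℝ^m} ρ dx = 1 and ρ_k(x) = k^m ρ(kx) for k ∈ ℕ, and let u : ℝ^m → ℂ be a bounded function with finite Hölder seminorm [u]_τ = sup_{x ≠ y} |u(x) − u(y)| / |x − y|^τ that moreover satisfies the little-Hölder condition lim_{h→0⁺} sup_{0 < |x − y| ≤ h} |u(x) − u(y)| / |x − y|^τ = 0. Then ρ_k * u → u in the C^τ-norm as k → ∞, i.e. sup_x |(ρ_k * u − u)(x)| + [ρ_k * u − u]_τ → 0. -/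

import Mathlib

/-!
Write `κ = ρ_k`. Since `∫ κ = 1`, `(κ * u - u)(x) = ∫ κ(z) (u(x - z) - u(x)) dz`. Given `ε`, the
little-Hölder condition gives `δ ≤ 1` with `|u(x) - u(y)| ≤ ε' |x - y|^τ` whenever `|x - y| ≤ δ`, and
for large `k` the kernel `κ` is supported in the ball of radius `δ`. Hence `|κ * u - u| ≤ ε' δ^τ ‖ρ‖₁`.
For the seminorm at `x, y`: if `|x - y| ≤ δ`, the two integrands differ by at most `2 ε' |x - y|^τ`;
otherwise the sup bounds at `x` and at `y` give `2 ε' δ^τ ‖ρ‖₁ ≤ 2 ε' ‖ρ‖₁ |x - y|^τ`.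
-/

open MeasureTheory Filter
open scoped Real Topology

noncomputable section

abbrev Vec (m : ℕ) : Type := EuclideanSpace ℝ (Fin m)

/-- The rescaled mollifier `ρ_k(x) = k^m ρ(kx)`. -/
def mollifier {m : ℕ} (ρ : Vec m → ℝ) (k : ℕ) : Vec m → ℝ :=
  fun x => (k : ℝ) ^ m * ρ ((k : ℝ) • x)

/-- Convolution of a real scalar kernel with a vector-valued function. -/
def convol {m : ℕ} {X : Type*} [NormedAddCommGroup X] [NormedSpace ℝ X]
    (ρ : Vec m → ℝ) (u : Vec m → X) : Vec m → X :=
  fun x => ∫ y : Vec m, ρ (x - y) • u y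

open Function Metric

section Holder

variable {E F : Type*} [SeminormedAddCommGroup E] [SeminormedAddCommGroup F] {u : E → F}
  {τ c δ : ℝ}

lemma norm_sub_le_mul_rpow_of_forall_ne (hτ : 0 < τ)
    (hu : ∀ x y, x ≠ y → ‖x - y‖ ≤ δ → ‖u x - u y‖ ≤ c * ‖x - y‖ ^ τ) {x y : E}
    (hxy : ‖x - y‖ ≤ δ) : ‖u x - u y‖ ≤ c * ‖x - y‖ ^ τ := by
  rcases eq_or_ne x y with rfl | hne
  · simp [Real.zero_rpow hτ.ne']
  · exact hu x y hne hxy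

lemma continuous_of_norm_sub_le_rpow (hτ : 0 < τ) (hδ : 0 < δ)
    (hu : ∀ x y, x ≠ y → ‖x - y‖ ≤ δ → ‖u x - u y‖ ≤ c * ‖x - y‖ ^ τ) : Continuous u := by
  refine continuous_iff_continuousAt.2 fun x => tendsto_iff_norm_sub_tendsto_zero.2 ?_
  have hlim : Tendsto (fun y => c * ‖y - x‖ ^ τ) (𝓝 x) (𝓝 0) := by
    have := ((Real.continuousAt_rpow_const 0 τ (Or.inr hτ.le)).tendsto.comp
      (tendsto_norm_sub_self x)).const_mul c
    simpa [Function.comp_def, Real.zero_rpow hτ.ne'] using this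
  refine squeeze_zero' (Eventually.of_forall fun _ => norm_nonneg _) ?_ hlim
  filter_upwards [closedBall_mem_nhds x hδ] with y hy
  rw [mem_closedBall, dist_eq_norm] at hy
  exact norm_sub_le_mul_rpow_of_forall_ne hτ hu hy

end Holder

lemma norm_integral_smul_le_of_support_subset {α E : Type*} [MeasurableSpace α] {μ : Measure α}
    [NormedAddCommGroup E] [NormedSpace ℝ E] {κ : α → ℝ} {w : α → E} {s : Set α} {M : ℝ}
    (hκ : Integrable κ μ) (hκs : support κ ⊆ s) (hw : ∀ z ∈ s, ‖w z‖ ≤ M) :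
    ‖∫ z, κ z • w z ∂μ‖ ≤ M * ∫ z, ‖κ z‖ ∂μ := by
  rw [mul_comm, ← integral_mul_const]
  refine norm_integral_le_of_norm_le (hκ.norm.mul_const M) (Eventually.of_forall fun z => ?_)
  rw [norm_smul]
  by_cases hz : κ z = 0
  · simp [hz]
  · exact mul_le_mul_of_nonneg_left (hw z (hκs hz)) (norm_nonneg _)

section Mollifier

variable {m : ℕ} {k : ℕ}

lemma integral_mollifier (f : Vec m → ℝ) (hk : k ≠ 0) : ∫ x, mollifier f k x = ∫ x, f x := by
  have hk' : (0 : ℝ) < k := by positivity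
  have h := Measure.integral_comp_smul (volume : Measure (Vec m)) f (k : ℝ)
  simp only [finrank_euclideanSpace, Fintype.card_fin] at h
  unfold mollifier
  rw [integral_const_mul, h, smul_eq_mul, abs_of_pos (by positivity)]
  field_simp

lemma integral_norm_mollifier (ρ : Vec m → ℝ) (hk : k ≠ 0) :
    ∫ x, ‖mollifier ρ k x‖ = ∫ x, ‖ρ x‖ := by
  rw [← integral_mollifier (fun x => ‖ρ x‖) hk]
  congr 1 with x
  simp [mollifier]

lemma continuous_mollifier {ρ : Vec m → ℝ} (hρ : Continuous ρ) : Continuous (mollifier ρ k) := by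
  unfold mollifier
  fun_prop

lemma HasCompactSupport.mollifier {ρ : Vec m → ℝ} (hρ : HasCompactSupport ρ) (hk : k ≠ 0) :
    HasCompactSupport (mollifier ρ k) :=
  (hρ.comp_smul (Nat.cast_ne_zero.2 hk)).mul_left

lemma support_mollifier_subset {ρ : Vec m → ℝ} {R : ℝ} (hρ : support ρ ⊆ closedBall 0 R)
    (hk : k ≠ 0) : support (mollifier ρ k) ⊆ closedBall 0 (R / k) := by
  have hk' : (0 : ℝ) < k := by positivity
  intro z hz
  have hρz : (k : ℝ) • z ∈ closedBall 0 R := hρ (right_ne_zero_of_mul hz)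
  rw [mem_closedBall_zero_iff, norm_smul, Real.norm_of_nonneg hk'.le] at hρz
  rw [mem_closedBall_zero_iff, le_div_iff₀ hk', mul_comm]
  exact hρz

lemma eventually_support_mollifier_subset {ρ : Vec m → ℝ} (hρ : HasCompactSupport ρ) {δ : ℝ}
    (hδ : 0 < δ) : ∀ᶠ k in atTop, support (mollifier ρ k) ⊆ closedBall 0 δ := by
  obtain ⟨R, hR⟩ := hρ.isBounded.subset_closedBall 0
  filter_upwards [eventually_ge_atTop ⌈R / δ⌉₊, eventually_ne_atTop 0] with k hRk hk
  have hk' : (0 : ℝ) < k := by positivity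
  refine (support_mollifier_subset ((subset_tsupport ρ).trans hR) hk).trans
    (closedBall_subset_closedBall ?_)
  rw [div_le_iff₀ hk', mul_comm, ← div_le_iff₀ hδ]
  exact (Nat.le_ceil _).trans (by exact_mod_cast hRk)

end Mollifier

section Kernel

variable {m : ℕ} {X : Type*} [NormedAddCommGroup X] [NormedSpace ℝ X] [CompleteSpace X]
  {κ : Vec m → ℝ} {u : Vec m → X} {r M : ℝ}

lemma convol_sub_self_eq_integral (hκ : Continuous κ) (hκc : HasCompactSupport κ)
    (hκ1 : ∫ z, κ z = 1) (hu : Continuous u) (x : Vec m) :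
    convol κ u x - u x = ∫ z, κ z • (u (x - z) - u x) := by
  have hint : Integrable (fun z => κ z • u (x - z)) :=
    (hκ.smul (hu.comp (continuous_sub_left x))).integrable_of_hasCompactSupport hκc.smul_right
  have hconv : convol κ u x = ∫ z, κ z • u (x - z) := by
    simpa [convol] using (integral_sub_left_eq_self (fun y => κ (x - y) • u y) volume x).symm
  simp_rw [smul_sub]
  rw [integral_sub hint ((hκ.integrable_of_hasCompactSupport hκc).smul_const _),
    integral_smul_const, hκ1, one_smul, hconv]

lemma norm_convol_sub_self_le (hκ : Continuous κ) (hκc : HasCompactSupport κ)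
    (hκ1 : ∫ z, κ z = 1) (hκr : support κ ⊆ closedBall 0 r) (hu : Continuous u) (x : Vec m)
    (hw : ∀ z ∈ closedBall (0 : Vec m) r, ‖u (x - z) - u x‖ ≤ M) :
    ‖convol κ u x - u x‖ ≤ M * ∫ z, ‖κ z‖ := by
  rw [convol_sub_self_eq_integral hκ hκc hκ1 hu]
  exact norm_integral_smul_le_of_support_subset (hκ.integrable_of_hasCompactSupport hκc) hκr hw

lemma norm_convol_sub_self_sub_le (hκ : Continuous κ) (hκc : HasCompactSupport κ)
    (hκ1 : ∫ z, κ z = 1) (hκr : support κ ⊆ closedBall 0 r) (hu : Continuous u) (x y : Vec m)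
    (hw : ∀ z ∈ closedBall (0 : Vec m) r, ‖(u (x - z) - u x) - (u (y - z) - u y)‖ ≤ M) :
    ‖(convol κ u x - u x) - (convol κ u y - u y)‖ ≤ M * ∫ z, ‖κ z‖ := by
  have hint : ∀ x, Integrable (fun z => κ z • (u (x - z) - u x)) := fun x =>
    (hκ.smul ((hu.comp (continuous_sub_left x)).sub continuous_const)).integrable_of_hasCompactSupport
      hκc.smul_right
  rw [convol_sub_self_eq_integral hκ hκc hκ1 hu, convol_sub_self_eq_integral hκ hκc hκ1 hu,
    ← integral_sub (hint x) (hint y)]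
  simp_rw [← smul_sub]
  exact norm_integral_smul_le_of_support_subset (hκ.integrable_of_hasCompactSupport hκc) hκr hw

section Rpow

variable {τ c δ : ℝ} (hτ : 0 ≤ τ) (hc : 0 ≤ c) (hκ : Continuous κ) (hκc : HasCompactSupport κ)
  (hκ1 : ∫ z, κ z = 1) (hκδ : support κ ⊆ closedBall 0 δ) (hu : Continuous u)
  (hloc : ∀ x y, ‖x - y‖ ≤ δ → ‖u x - u y‖ ≤ c * ‖x - y‖ ^ τ)
include hτ hc hκ hκc hκ1 hκδ hu hloc

lemma norm_convol_sub_self_le_mul_rpow (x : Vec m) :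
    ‖convol κ u x - u x‖ ≤ c * δ ^ τ * ∫ z, ‖κ z‖ := by
  refine norm_convol_sub_self_le hκ hκc hκ1 hκδ hu x fun z hz => ?_
  rw [mem_closedBall_zero_iff] at hz
  calc ‖u (x - z) - u x‖ ≤ c * ‖z‖ ^ τ := by simpa using hloc (x - z) x (by simpa using hz)
    _ ≤ c * δ ^ τ := by gcongr

lemma norm_convol_sub_self_sub_le_mul_rpow (hδ : 0 ≤ δ) (x y : Vec m) :
    ‖(convol κ u x - u x) - (convol κ u y - u y)‖ ≤ 2 * c * (∫ z, ‖κ z‖) * ‖x - y‖ ^ τ := by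
  rcases le_or_gt ‖x - y‖ δ with hxy | hxy
  · calc _ ≤ 2 * c * ‖x - y‖ ^ τ * ∫ z, ‖κ z‖ := by
          refine norm_convol_sub_self_sub_le hκ hκc hκ1 hκδ hu x y fun z _ => ?_
          have hshift : (x - z) - (y - z) = x - y := by abel
          calc ‖(u (x - z) - u x) - (u (y - z) - u y)‖
              = ‖(u (x - z) - u (y - z)) - (u x - u y)‖ := by congr 1; abel
            _ ≤ c * ‖x - y‖ ^ τ + c * ‖x - y‖ ^ τ := (norm_sub_le _ _).trans
                (add_le_add (hshift ▸ hloc _ _ (hshift ▸ hxy)) (hloc x y hxy))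
            _ = 2 * c * ‖x - y‖ ^ τ := by ring
      _ = 2 * c * (∫ z, ‖κ z‖) * ‖x - y‖ ^ τ := by ring
  · calc _ ≤ ‖convol κ u x - u x‖ + ‖convol κ u y - u y‖ := norm_sub_le _ _
      _ ≤ 2 * c * (∫ z, ‖κ z‖) * δ ^ τ := by
          linarith [norm_convol_sub_self_le_mul_rpow hτ hc hκ hκc hκ1 hκδ hu hloc x,
            norm_convol_sub_self_le_mul_rpow hτ hc hκ hκc hκ1 hκδ hu hloc y]
      _ ≤ 2 * c * (∫ z, ‖κ z‖) * ‖x - y‖ ^ τ := by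
          gcongr

end Rpow

end Kernel

theorem statement13_general (τ : ℝ) (hτ0 : 0 < τ) (m : ℕ)
    (ρ : Vec m → ℝ) (hρs : ContDiff ℝ (⊤ : ℕ∞) ρ) (hρc : HasCompactSupport ρ)
    (hρ1 : (∫ x : Vec m, ρ x) = 1)
    (u : Vec m → ℂ)
    (hlittle : ∀ ε : ℝ, 0 < ε → ∃ δ : ℝ, 0 < δ ∧ ∀ x y : Vec m,
      x ≠ y → ‖x - y‖ ≤ δ → ‖u x - u y‖ ≤ ε * ‖x - y‖ ^ τ) :
    ∀ ε : ℝ, 0 < ε → ∃ K : ℕ, ∀ k : ℕ, K ≤ k → 1 ≤ k →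
      (∀ x : Vec m, ‖convol (mollifier ρ k) u x - u x‖ ≤ ε) ∧
      (∀ x y : Vec m,
        ‖(convol (mollifier ρ k) u x - u x) - (convol (mollifier ρ k) u y - u y)‖ ≤
          ε * ‖x - y‖ ^ τ) := by
  intro ε hε
  set I := ∫ z, ‖ρ z‖
  have hI : 0 ≤ I := integral_nonneg fun _ => norm_nonneg _
  set ε' := ε / (2 * (I + 1))
  have hε' : 0 < ε' := by positivity
  have hεI : 2 * ε' * I ≤ ε := by
    have : 2 * ε' * (I + 1) = ε := by simp only [ε']; field_simp
    nlinarith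
  obtain ⟨δ₀, hδ₀, hlittleδ⟩ := hlittle ε' hε'
  have hu : Continuous u := continuous_of_norm_sub_le_rpow hτ0 hδ₀ hlittleδ
  set δ := min δ₀ 1
  have hδ : 0 < δ := lt_min hδ₀ one_pos
  have hδτ : δ ^ τ ≤ 1 := Real.rpow_le_one hδ.le (min_le_right _ _) hτ0.le
  have hloc : ∀ x y, ‖x - y‖ ≤ δ → ‖u x - u y‖ ≤ ε' * ‖x - y‖ ^ τ := fun x y hxy =>
    norm_sub_le_mul_rpow_of_forall_ne hτ0 hlittleδ (hxy.trans (min_le_left _ _))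
  obtain ⟨K, hK⟩ := eventually_atTop.1 (eventually_support_mollifier_subset hρc hδ)
  refine ⟨K, fun k hKk hk => ?_⟩
  have hk0 : k ≠ 0 := by omega
  have hκ := continuous_mollifier (k := k) hρs.continuous
  have hκ1 : ∫ z, mollifier ρ k z = 1 := by rw [integral_mollifier ρ hk0, hρ1]
  have hκI : ∫ z, ‖mollifier ρ k z‖ = I := integral_norm_mollifier ρ hk0
  refine ⟨fun x => ?_, fun x y => ?_⟩
  · calc _ ≤ ε' * δ ^ τ * I := hκI ▸ norm_convol_sub_self_le_mul_rpow hτ0.le hε'.le hκ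
          (hρc.mollifier hk0) hκ1 (hK k hKk) hu hloc x
      _ ≤ ε := by nlinarith [Real.rpow_nonneg hδ.le τ]
  · calc _ ≤ 2 * ε' * I * ‖x - y‖ ^ τ := hκI ▸ norm_convol_sub_self_sub_le_mul_rpow hτ0.le
          hε'.le hκ (hρc.mollifier hk0) hκ1 (hK k hKk) hu hloc hδ.le x y
      _ ≤ ε * ‖x - y‖ ^ τ := by gcongr

/-- for a bounded `τ`-Hölder function `u` satisfying the little-Hölder
condition, the mollifications `ρ_k * u` converge to `u` in the `C^τ`-norm. -/
theorem statement13 (τ : ℝ) (hτ0 : 0 < τ) (hτ1 : τ < 1) (m : ℕ) (hm : 1 ≤ m)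
    (ρ : Vec m → ℝ) (hρs : ContDiff ℝ (⊤ : ℕ∞) ρ) (hρc : HasCompactSupport ρ)
    (hρ1 : (∫ x : Vec m, ρ x) = 1)
    (u : Vec m → ℂ)
    (Cb : ℝ) (hub : ∀ x, ‖u x‖ ≤ Cb)
    (Ch : ℝ) (huh : ∀ x y : Vec m, ‖u x - u y‖ ≤ Ch * ‖x - y‖ ^ τ)
    (hlittle : ∀ ε : ℝ, 0 < ε → ∃ δ : ℝ, 0 < δ ∧ ∀ x y : Vec m,
      x ≠ y → ‖x - y‖ ≤ δ → ‖u x - u y‖ ≤ ε * ‖x - y‖ ^ τ) :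
    ∀ ε : ℝ, 0 < ε → ∃ K : ℕ, ∀ k : ℕ, K ≤ k → 1 ≤ k →
      (∀ x : Vec m, ‖convol (mollifier ρ k) u x - u x‖ ≤ ε) ∧
      (∀ x y : Vec m,
        ‖(convol (mollifier ρ k) u x - u x) - (convol (mollifier ρ k) u y - u y)‖ ≤
          ε * ‖x - y‖ ^ τ) :=
  statement13_general τ hτ0 m ρ hρs hρc hρ1 u hlittle
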